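/- (Theorem 5.2, transitivity of closeness.) Let ρ be an ordinal and x, u, v, w : ℕ → X sequences. If for every m ∈ ℕ, {n : d (u n) (x n) ♯ ω^ρ · m ≤ d (v n) (x n)} ∈ F and for every m ∈ ℕ, {n : d (v n) (x n) ♯ ω^ρ · m ≤ d (w n) (x n)} ∈ F, then for every m ∈ ℕ, {n : d (u n) (x n) ♯ ω^ρ · m ≤ d (w n) (x n)} ∈ F. (Hence the ρ-galaxies are partially ordered according to their closeness to the principal ρ-galaxy.) -/

import Mathlib

open Filter Ordinal
open scoped Ordinal

universe u

/-- Natural (Hessenberg) addition of ordinals, as defined in the older Mathlib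
(`Mathlib.SetTheory.Ordinal.NaturalOps`, since removed). -/
noncomputable def Ordinal.nadd : Ordinal.{u} → Ordinal.{u} → Ordinal.{u}
  | a, b =>
    max (blsub.{u, u} a fun a' _ => Ordinal.nadd a' b) (blsub.{u, u} b fun b' _ => Ordinal.nadd a b')
termination_by a b => (a, b)
decreasing_by
  · exact Prod.Lex.left _ _ (by assumption)
  · exact Prod.Lex.right _ (by assumption)

infixl:65 " ♯ " => Ordinal.nadd

/-- Sequences `x, y : ℕ → X` are `ρ`-limitedly distant if there exists `μ ∈ ℕ` with
`{n : d (x n) (y n) ≤ ω^ρ · μ} ∈ F`. -/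
def LimitedlyDistant {X : Type*} (d : X → X → Ordinal) (F : Ultrafilter ℕ)
    (ρ : Ordinal) (x y : ℕ → X) : Prop :=
  ∃ μ : ℕ, {n : ℕ | d (x n) (y n) ≤ ω ^ ρ * μ} ∈ F

theorem Ordinal.nadd_zero (a : Ordinal.{u}) : a ♯ 0 = a := by
  induction a using WellFoundedLT.induction with
  | ind a ih =>
    rw [Ordinal.nadd, blsub_zero, max_eq_left zero_le]
    conv_rhs => rw [← blsub_id a]
    congr
    funext b hb
    exact ih b hb

theorem closeness_trans_general
    (X : Type*) (d : X → X → Ordinal)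
    (F : Ultrafilter ℕ)
    (ρ : Ordinal) (x u v w : ℕ → X)
    (huv : ∀ m : ℕ, {n : ℕ | d (u n) (x n) ♯ ω ^ ρ * m ≤ d (v n) (x n)} ∈ F)
    (hvw : ∀ m : ℕ, {n : ℕ | d (v n) (x n) ♯ ω ^ ρ * m ≤ d (w n) (x n)} ∈ F) :
    ∀ m : ℕ, {n : ℕ | d (u n) (x n) ♯ ω ^ ρ * m ≤ d (w n) (x n)} ∈ F := by
  intro m
  -- the case `m = 0` of `hvw` says that `v` is eventually at most as far from `x` as `w`
  filter_upwards [huv m, hvw 0] with n huv_n hvw_n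
  rw [Nat.cast_zero, mul_zero, nadd_zero] at hvw_n
  exact huv_n.trans hvw_n

theorem closeness_trans
    (X : Type*) (d : X → X → Ordinal)
    (hd0 : ∀ a b : X, d a b = 0 ↔ a = b)
    (hdsymm : ∀ a b : X, d a b = d b a)
    (hdtri : ∀ a b c : X, d a c ≤ d a b ♯ d b c)
    (F : Ultrafilter ℕ) (hF : ∀ s : Set ℕ, sᶜ.Finite → s ∈ F)
    (ρ : Ordinal) (x u v w : ℕ → X)
    (huv : ∀ m : ℕ, {n : ℕ | d (u n) (x n) ♯ ω ^ ρ * m ≤ d (v n) (x n)} ∈ F)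
    (hvw : ∀ m : ℕ, {n : ℕ | d (v n) (x n) ♯ ω ^ ρ * m ≤ d (w n) (x n)} ∈ F) :
    ∀ m : ℕ, {n : ℕ | d (u n) (x n) ♯ ω ^ ρ * m ≤ d (w n) (x n)} ∈ F :=
  closeness_trans_general X d F ρ x u v w huv hvw
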